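/- arXiv:2509.26030 — 3 statements merged into one kernel-verified Lean document; each statement's English description precedes it below -/
import Mathlib

section
/- Let ε ∈ (0, 1 − 1/K) and for η ≥ 0 set W_η = −η·∇_W 𝓛(W₀). Then max_{k∈[K]} [f_{W_η}(E_k)]_k ≥ 1 − ε holds if and only if η ≥ log((1/ε − 1)(K−1)) / max{γ₁, γ₂}; in particular, the infimum of all feasible step sizes is η_GD^ε = log((1/ε − 1)(K−1)) / max{γ₁, γ₂}. -/
noncomputable section

open Matrix

attribute [local instance] Matrix.normedAddCommGroup Matrix.normedSpace

/-- Softmax probability that query `k` (key embedding = `k`-th column of `Ee`) is mapped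
to object `k'` (`k'`-th column of `Et`):
`[f_W(E_k)]_{k'} = exp(Ẽ_{k'}ᵀ W E_k) / ∑_{k''} exp(Ẽ_{k''}ᵀ W E_k)`. -/
def prob {K : ℕ} (Et Ee W : Matrix (Fin K) (Fin K) ℝ) (k' k : Fin K) : ℝ :=
  Real.exp ((Etᵀ * W * Ee) k' k) / ∑ k'' : Fin K, Real.exp ((Etᵀ * W * Ee) k'' k)

/-- Class frequencies: `p_k = α/L` for the first `L` classes, `p_k = (1-α)/(K-L)` for the rest. -/
def pclass (K L : ℕ) (α : ℝ) (k : Fin K) : ℝ :=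
  if (k : ℕ) < L then α / L else (1 - α) / ((K : ℝ) - L)

/-- Population cross-entropy loss `𝓛(W) = -∑_k p_k log [f_W(E_k)]_k`. -/
def ploss {K : ℕ} (L : ℕ) (α : ℝ) (Et Ee W : Matrix (Fin K) (Fin K) ℝ) : ℝ :=
  -∑ k : Fin K, pclass K L α k * Real.log (prob Et Ee W k k)

/-- `G` is the Fréchet gradient of `f` at `W` with respect to the Frobenius
inner product: `f` is differentiable at `W` with differential `H ↦ trace(Gᵀ H)`. -/
def IsGradientAt {K : ℕ} (f : Matrix (Fin K) (Fin K) ℝ → ℝ)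
    (G W : Matrix (Fin K) (Fin K) ℝ) : Prop :=
  ∃ l : Matrix (Fin K) (Fin K) ℝ →L[ℝ] ℝ, HasFDerivAt f l W ∧ ∀ H, l H = (Gᵀ * H).trace

/-- `(U, d, V)` is a singular value decomposition of `G`: `U`, `V` orthogonal,
`d` nonnegative, and `G = U · diagonal d · Vᵀ`. -/
def IsSVD {K : ℕ} (G U : Matrix (Fin K) (Fin K) ℝ) (d : Fin K → ℝ)
    (V : Matrix (Fin K) (Fin K) ℝ) : Prop :=
  Uᵀ * U = 1 ∧ U * Uᵀ = 1 ∧ Vᵀ * V = 1 ∧ V * Vᵀ = 1 ∧ (∀ i, 0 ≤ d i) ∧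
    G = U * Matrix.diagonal d * Vᵀ

/-- `U · norm(Σ) · Vᵀ`, where `norm(Σ)` replaces every nonzero diagonal entry of
`Σ = diagonal d` by `1`. -/
def muonOf {K : ℕ} (U : Matrix (Fin K) (Fin K) ℝ) (d : Fin K → ℝ)
    (V : Matrix (Fin K) (Fin K) ℝ) : Matrix (Fin K) (Fin K) ℝ :=
  U * Matrix.diagonal (fun i => if d i = 0 then (0 : ℝ) else 1) * Vᵀ

lemma grad_entry {K : ℕ} (hK : 2 ≤ K) (Et Ee : Matrix (Fin K) (Fin K) ℝ)
    (hEe : Eeᵀ * Ee = 1) (hEt : Etᵀ * Et = 1) (L : ℕ) (α : ℝ)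
    (G : Matrix (Fin K) (Fin K) ℝ) (hG : IsGradientAt (ploss L α Et Ee) G 0)
    (i k : Fin K) :
    (Etᵀ * G * Ee) i k
      = pclass K L α k / K - (if i = k then pclass K L α k else 0) := by
  obtain ⟨l, hl, hlv⟩ := hG
  haveI : Nonempty (Fin K) := ⟨⟨0, by omega⟩⟩
  have hKpos : (0:ℝ) < K := by positivity
  let Emat : Matrix (Fin K) (Fin K) ℝ :=
    Matrix.of (fun a b => if a = i ∧ b = k then (1:ℝ) else 0)
  let H : Matrix (Fin K) (Fin K) ℝ := Et * Emat * Eeᵀ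
  -- trace identity
  have htrace : (Gᵀ * H).trace = (Etᵀ * G * Ee) i k := by
    simp only [H, Emat, Matrix.trace, Matrix.diag, Matrix.mul_apply, Matrix.transpose_apply,
      Matrix.of_apply, Finset.mul_sum, Finset.sum_mul, mul_ite, ite_mul, mul_zero, zero_mul,
      mul_one, ite_and, Finset.sum_ite_eq', Finset.sum_ite_eq, Finset.mem_univ, if_true]
    exact Finset.sum_congr rfl fun a _ => Finset.sum_congr rfl fun b _ => by ring
  -- the conjugated direction
  have hconj : Etᵀ * H * Ee = Emat := by
    simp only [H, Matrix.mul_assoc]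
    rw [hEe, Matrix.mul_one, ← Matrix.mul_assoc, hEt, Matrix.one_mul]
  have hconjt : ∀ t : ℝ, Etᵀ * (t • H) * Ee = t • Emat := by
    intro t
    rw [Matrix.mul_smul, Matrix.smul_mul, hconj]
  -- directional derivative via chain rule
  have hline : HasDerivAt (fun t : ℝ => t • H) H 0 := by
    have h0 := (hasDerivAt_id (0:ℝ)).smul_const H
    simp at h0
    exact h0
  have hdir : HasDerivAt (fun t : ℝ => ploss L α Et Ee (t • H)) (l H) 0 := by
    have hl2 : HasFDerivAt (ploss L α Et Ee) l ((0:ℝ) • H) := by simpa using hl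
    have := hl2.comp_hasDerivAt 0 hline
    exact this
  -- rewrite the composite in closed form
  have hg : (fun t : ℝ => ploss L α Et Ee (t • H))
      = fun t : ℝ => -∑ k' : Fin K, pclass K L α k' *
          (t * Emat k' k' - Real.log (∑ k'' : Fin K, Real.exp (t * Emat k'' k'))) := by
    funext t
    unfold ploss prob
    rw [hconjt]
    congr 1
    refine Finset.sum_congr rfl fun k' _ => ?_
    congr 1
    have hs : (0:ℝ) < ∑ k'' : Fin K, Real.exp ((t • Emat) k'' k') :=
      Finset.sum_pos (fun _ _ => Real.exp_pos _) Finset.univ_nonempty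
    rw [Real.log_div (Real.exp_ne_zero _) (ne_of_gt hs), Real.log_exp]
    simp [Matrix.smul_apply, smul_eq_mul]
  -- explicit derivative
  have hexpl : HasDerivAt
      (fun t : ℝ => -∑ k' : Fin K, pclass K L α k' *
          (t * Emat k' k' - Real.log (∑ k'' : Fin K, Real.exp (t * Emat k'' k'))))
      (-∑ k' : Fin K, pclass K L α k' *
          (Emat k' k' - (∑ k'' : Fin K, Emat k'' k') / K)) 0 := by
    refine HasDerivAt.neg ?_
    refine HasDerivAt.fun_sum fun k' _ => ?_
    refine HasDerivAt.const_mul _ ?_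
    refine HasDerivAt.sub (hasDerivAt_mul_const _) ?_
    have hsum : HasDerivAt (fun t : ℝ => ∑ k'' : Fin K, Real.exp (t * Emat k'' k'))
        (∑ k'' : Fin K, Real.exp (0 * Emat k'' k') * Emat k'' k') 0 :=
      HasDerivAt.fun_sum fun k'' _ => (hasDerivAt_mul_const (Emat k'' k')).exp
    have hne : (∑ k'' : Fin K, Real.exp ((0:ℝ) * Emat k'' k')) ≠ 0 :=
      ne_of_gt (Finset.sum_pos (fun _ _ => Real.exp_pos _) Finset.univ_nonempty)
    have := hsum.log hne
    simpa using this
  rw [hg] at hdir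
  have hlH : l H = -∑ k' : Fin K, pclass K L α k' *
      (Emat k' k' - (∑ k'' : Fin K, Emat k'' k') / K) := hdir.unique hexpl
  have hval : (-∑ k' : Fin K, pclass K L α k' *
      (Emat k' k' - (∑ k'' : Fin K, Emat k'' k') / K))
      = pclass K L α k / K - (if i = k then pclass K L α k else 0) := by
    simp only [Emat, Matrix.of_apply, ite_and, Finset.sum_ite_eq, Finset.mem_univ, if_true]
    simp only [Finset.sum_ite_eq', Finset.mem_univ, if_true]
    have hcg : ∀ x ∈ Finset.univ, pclass K L α x *
        ((if x = i then if x = k then (1:ℝ) else 0 else 0) - (if x = k then (1:ℝ) else 0) / K)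
        = if x = k then pclass K L α k * ((if i = k then (1:ℝ) else 0) - 1/K) else 0 := by
      intro x _
      by_cases hx : x = k
      · by_cases hik : i = k
        · simp [hx, hik]
        · have h2 : ¬ (k = i) := fun h => hik h.symm
          simp [hx, hik, h2]
      · simp [hx]
    rw [Finset.sum_congr rfl hcg, Finset.sum_ite_eq' Finset.univ k]
    simp only [Finset.mem_univ, if_true]
    by_cases hik : i = k <;> simp [hik] <;> field_simp <;> ring
  rw [← htrace, ← hlv, hlH, hval]

/-- Minimal step size for one-step GD: for `ε ∈ (0, 1-1/K)`, the best-learned class reaches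
probability `1-ε` iff `η ≥ log((1/ε-1)(K-1)) / max{γ₁,γ₂}`; in particular the infimum of
feasible step sizes is `η_GD^ε = log((1/ε-1)(K-1)) / max{γ₁,γ₂}`. -/
theorem stmt12 {K : ℕ} (hK : 2 ≤ K) (Et Ee : Matrix (Fin K) (Fin K) ℝ)
    (hEe : Eeᵀ * Ee = 1) (hEt : Etᵀ * Et = 1)
    (α β : ℝ) (hα : α ∈ Set.Ioo (0:ℝ) 1) (hβ : β ∈ Set.Ioo (0:ℝ) 1)
    (L : ℕ) (hLβ : (L : ℝ) = β * K) (hL1 : 1 ≤ L) (hLK : L ≤ K - 1)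
    (γ₁ γ₂ : ℝ) (hγ₁ : γ₁ = α / L) (hγ₂ : γ₂ = (1 - α) / ((K : ℝ) - L))
    (ε : ℝ) (hε : ε ∈ Set.Ioo (0:ℝ) (1 - 1 / K))
    (G : Matrix (Fin K) (Fin K) ℝ) (hG : IsGradientAt (ploss L α Et Ee) G 0) :
    (∀ (η : ℝ) (hη : 0 ≤ η),
      (1 - ε ≤ Finset.univ.sup' ⟨⟨0, by omega⟩, Finset.mem_univ _⟩
          (fun k : Fin K => prob Et Ee (-η • G) k k)
        ↔ Real.log ((1 / ε - 1) * ((K : ℝ) - 1)) / max γ₁ γ₂ ≤ η)) ∧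
    sInf {η : ℝ | 0 ≤ η ∧
        1 - ε ≤ Finset.univ.sup' ⟨⟨0, by omega⟩, Finset.mem_univ _⟩
          (fun k : Fin K => prob Et Ee (-η • G) k k)}
      = Real.log ((1 / ε - 1) * ((K : ℝ) - 1)) / max γ₁ γ₂ := by
  haveI : Nonempty (Fin K) := ⟨⟨0, by omega⟩⟩
  have hK2 : (2:ℝ) ≤ K := by exact_mod_cast hK
  have hKpos : (0:ℝ) < K := by linarith
  have hK1 : (1:ℝ) ≤ (K:ℝ) - 1 := by linarith
  obtain ⟨hα0, hα1⟩ := hα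
  obtain ⟨hε0, hε1⟩ := hε
  have hLpos : (0:ℝ) < L := by exact_mod_cast hL1
  have hLKnat : L < K := by omega
  have hLK' : (L:ℝ) < (K:ℝ) := by exact_mod_cast hLKnat
  have hγ1pos : 0 < γ₁ := by rw [hγ₁]; positivity
  have hγ2pos : 0 < γ₂ := by
    rw [hγ₂]; apply div_pos <;> linarith
  have hgmpos : 0 < max γ₁ γ₂ := lt_of_lt_of_le hγ1pos (le_max_left _ _)
  have hple : ∀ k : Fin K, pclass K L α k ≤ max γ₁ γ₂ := by
    intro k; unfold pclass; split
    · rw [hγ₁] at *; exact le_max_left _ _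
    · rw [hγ₂] at *; exact le_max_right _ _
  have hgrad := grad_entry hK Et Ee hEe hEt L α G hG
  -- closed form for the diagonal probabilities
  have hprob : ∀ (η : ℝ) (k : Fin K), prob Et Ee (-η • G) k k
      = Real.exp (η * pclass K L α k) /
          (Real.exp (η * pclass K L α k) + ((K:ℝ) - 1)) := by
    intro η k
    set p := pclass K L α k with hpdef
    have hA : ∀ k'' : Fin K, (Etᵀ * (-η • G) * Ee) k'' k
        = -η * (p / K - (if k'' = k then p else 0)) := by
      intro k''
      have h1 : Etᵀ * (-η • G) * Ee = (-η) • (Etᵀ * G * Ee) := by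
        rw [Matrix.mul_smul, Matrix.smul_mul]
      rw [h1, Matrix.smul_apply, hgrad k'' k, smul_eq_mul]
    unfold prob
    have hterm : ∀ k'' : Fin K, Real.exp ((Etᵀ * (-η • G) * Ee) k'' k)
        = (if k'' = k then Real.exp (η*p - η*p/K) - Real.exp (-(η*p)/K) else 0)
          + Real.exp (-(η*p)/K) := by
      intro k''
      by_cases h : k'' = k
      · rw [hA, if_pos h, if_pos h, sub_add_cancel]
        congr 1; ring
      · rw [hA, if_neg h, if_neg h, zero_add]
        congr 1; ring
    have hden : ∑ k'' : Fin K, Real.exp ((Etᵀ * (-η • G) * Ee) k'' k)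
        = Real.exp (η*p - η*p/K) + ((K:ℝ) - 1) * Real.exp (-(η*p)/K) := by
      rw [Finset.sum_congr rfl fun x _ => hterm x, Finset.sum_add_distrib,
        Finset.sum_ite_eq' Finset.univ k, Finset.sum_const, Finset.card_univ,
        Fintype.card_fin, nsmul_eq_mul]
      simp only [Finset.mem_univ, if_true]
      ring
    rw [hden, hA k, if_pos rfl]
    have hab : Real.exp (-η * (p / ↑K - p)) = Real.exp (η*p) * Real.exp (-(η*p)/K) := by
      rw [← Real.exp_add]; congr 1; ring
    have hab2 : Real.exp (η*p - η*p/K) = Real.exp (η*p) * Real.exp (-(η*p)/K) := by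
      rw [← Real.exp_add]; congr 1; ring
    rw [hab, hab2, show Real.exp (η*p) * Real.exp (-(η*p)/K)
        + ((K:ℝ)-1) * Real.exp (-(η*p)/K)
        = (Real.exp (η*p) + ((K:ℝ)-1)) * Real.exp (-(η*p)/K) by ring,
      mul_div_mul_right _ _ (Real.exp_ne_zero _)]
  -- monotonicity of x ↦ e^x/(e^x + (K-1))
  have hmono : ∀ x y : ℝ, x ≤ y →
      Real.exp x / (Real.exp x + ((K:ℝ)-1)) ≤ Real.exp y / (Real.exp y + ((K:ℝ)-1)) := by
    intro x y hxy
    have h1 := Real.exp_le_exp.2 hxy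
    have h2 := Real.exp_pos x
    have h3 := Real.exp_pos y
    rw [div_le_div_iff₀ (by positivity) (by positivity)]
    nlinarith
  -- the sup equals the value at the best class
  have hsup : ∀ η : ℝ, 0 ≤ η →
      (Finset.univ.sup' ⟨⟨0, by omega⟩, Finset.mem_univ _⟩
          (fun k : Fin K => prob Et Ee (-η • G) k k))
        = Real.exp (η * max γ₁ γ₂) / (Real.exp (η * max γ₁ γ₂) + ((K:ℝ)-1)) := by
    intro η hη
    apply le_antisymm
    · apply Finset.sup'_le
      intro k _
      rw [hprob]
      exact hmono _ _ (mul_le_mul_of_nonneg_left (hple k) hη)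
    · obtain ⟨k₀, hk₀⟩ : ∃ k₀ : Fin K, pclass K L α k₀ = max γ₁ γ₂ := by
        rcases max_cases γ₁ γ₂ with ⟨h1, _⟩ | ⟨h1, _⟩
        · refine ⟨⟨0, by omega⟩, ?_⟩
          unfold pclass
          rw [if_pos (by simp; omega), h1, hγ₁]
        · refine ⟨⟨L, hLKnat⟩, ?_⟩
          unfold pclass
          rw [if_neg (by simp), h1, hγ₂]
      have := Finset.le_sup' (f := fun k : Fin K => prob Et Ee (-η • G) k k)
        (Finset.mem_univ k₀)
      rw [hprob, hk₀] at this
      exact this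
  -- basic facts about the threshold
  have hεK : ε * K < (K:ℝ) - 1 := by
    have h := hε1
    rw [lt_sub_iff_add_lt] at h
    have h2 : (1/(K:ℝ)) * K = 1 := by field_simp
    nlinarith [mul_lt_mul_of_pos_right h hKpos]
  have hc1 : 1 < (1 / ε - 1) * ((K:ℝ) - 1) := by
    have h1 : (1 / ε - 1) = (1 - ε)/ε := by field_simp
    rw [h1, div_mul_eq_mul_div, lt_div_iff₀ hε0, one_mul]
    nlinarith
  have hlogpos : 0 < Real.log ((1 / ε - 1) * ((K:ℝ) - 1)) := Real.log_pos hc1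
  have hTpos : 0 < Real.log ((1 / ε - 1) * ((K:ℝ) - 1)) / max γ₁ γ₂ :=
    div_pos hlogpos hgmpos
  -- the key scalar iff
  have hkey : ∀ x : ℝ, (1 - ε ≤ Real.exp x / (Real.exp x + ((K:ℝ)-1))
      ↔ Real.log ((1 / ε - 1) * ((K:ℝ) - 1)) ≤ x) := by
    intro x
    have hEpos := Real.exp_pos x
    rw [Real.log_le_iff_le_exp (by linarith), le_div_iff₀ (by positivity)]
    have h1 : (1 / ε - 1) * ((K:ℝ) - 1) = (1 - ε) * ((K:ℝ)-1) / ε := by field_simp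
    rw [h1, div_le_iff₀ hε0]
    constructor <;> intro h <;> nlinarith
  have hiff : ∀ (η : ℝ), 0 ≤ η →
      (1 - ε ≤ Finset.univ.sup' ⟨⟨0, by omega⟩, Finset.mem_univ _⟩
          (fun k : Fin K => prob Et Ee (-η • G) k k)
        ↔ Real.log ((1 / ε - 1) * ((K : ℝ) - 1)) / max γ₁ γ₂ ≤ η) := by
    intro η hη
    rw [hsup η hη, hkey (η * max γ₁ γ₂), div_le_iff₀ hgmpos]
  refine ⟨hiff, ?_⟩
  have hset : {η : ℝ | 0 ≤ η ∧
      1 - ε ≤ Finset.univ.sup' ⟨⟨0, by omega⟩, Finset.mem_univ _⟩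
        (fun k : Fin K => prob Et Ee (-η • G) k k)}
      = Set.Ici (Real.log ((1 / ε - 1) * ((K : ℝ) - 1)) / max γ₁ γ₂) := by
    ext η
    simp only [Set.mem_setOf_eq, Set.mem_Ici]
    constructor
    · rintro ⟨hη, hcond⟩
      exact (hiff η hη).1 hcond
    · intro hTη
      have hη : 0 ≤ η := le_trans hTpos.le hTη
      exact ⟨hη, (hiff η hη).2 hTη⟩
  rw [hset, csInf_Ici]

end
end

section
/- Let g ∈ ℝⁿ with g ≠ 0 and let λ > 0. Then the vector Δw* = −(‖g‖₁/λ)·sign(g) (with sign taken entrywise and sign(0) = 0) is a global minimizer of the function Δw ↦ ⟨g, Δw⟩ + (λ/2)‖Δw‖_∞² over ℝⁿ, and the minimum value equals −‖g‖₁²/(2λ). -/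
noncomputable section

/-- Adam (sign descent) as steepest descent for the `ℓ∞` norm: for `g ≠ 0` and `λ > 0`,
`Δw* = -(‖g‖₁/λ)·sign(g)` globally minimizes `Δw ↦ ⟨g, Δw⟩ + (λ/2)‖Δw‖_∞²`, with minimum
value `-‖g‖₁²/(2λ)`.  Here `Fin n → ℝ` carries the sup (`ℓ∞`) norm. -/
theorem stmt18 {n : ℕ} (g : Fin n → ℝ) (hg : g ≠ 0) (lam : ℝ) (hlam : 0 < lam)
    (F : (Fin n → ℝ) → ℝ)
    (hF : F = fun w => (∑ i, g i * w i) + lam / 2 * ‖w‖ ^ 2)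
    (wstar : Fin n → ℝ)
    (hw : wstar = fun i => -((∑ j, |g j|) / lam) * Real.sign (g i)) :
    (∀ w : Fin n → ℝ, F wstar ≤ F w) ∧ F wstar = -(∑ i, |g i|) ^ 2 / (2 * lam) := by
  set A : ℝ := ∑ j, |g j| with hA
  obtain ⟨i0, hi0⟩ : ∃ i, g i ≠ 0 := by
    by_contra h
    push_neg at h
    exact hg (funext h)
  have hApos : 0 < A := by
    apply Finset.sum_pos' (fun i _ => abs_nonneg _)
    exact ⟨i0, Finset.mem_univ _, abs_pos.2 hi0⟩
  -- norm of wstar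
  have hnorm : ‖wstar‖ = A / lam := by
    apply le_antisymm
    · apply pi_norm_le_iff_of_nonneg (by positivity) |>.2
      intro i
      rw [hw]
      simp only [Real.norm_eq_abs, abs_mul, abs_neg, abs_div]
      rw [abs_of_nonneg hApos.le, abs_of_nonneg hlam.le]
      rcases lt_trichotomy (g i) 0 with h | h | h
      · rw [Real.sign_of_neg h]; simp
      · rw [h, Real.sign_zero]; simp; positivity
      · rw [Real.sign_of_pos h]; simp
    · calc A / lam = |wstar i0| := by
            rw [hw]
            simp only [abs_mul, abs_neg, abs_div]
            rcases lt_trichotomy (g i0) 0 with h | h | h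
            · rw [Real.sign_of_neg h]
              rw [abs_of_nonneg hApos.le, abs_of_nonneg hlam.le]; simp
            · exact absurd h hi0
            · rw [Real.sign_of_pos h]
              rw [abs_of_nonneg hApos.le, abs_of_nonneg hlam.le]; simp
        _ ≤ ‖wstar‖ := by
            have := norm_le_pi_norm wstar i0
            simpa [Real.norm_eq_abs] using this
  have hsum : (∑ i, g i * wstar i) = -(A ^ 2) / lam := by
    rw [hw]
    have : ∀ i, g i * (-(A / lam) * Real.sign (g i)) = -(A / lam) * |g i| := by
      intro i
      have : g i * Real.sign (g i) = |g i| := by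
        rcases lt_trichotomy (g i) 0 with h | h | h
        · rw [Real.sign_of_neg h, abs_of_neg h]; ring
        · rw [h]; simp
        · rw [Real.sign_of_pos h, abs_of_pos h]; ring
      calc g i * (-(A / lam) * Real.sign (g i)) = -(A / lam) * (g i * Real.sign (g i)) := by ring
        _ = -(A / lam) * |g i| := by rw [this]
    simp only [this]
    rw [← Finset.mul_sum, ← hA]
    field_simp
  have hFstar : F wstar = -A ^ 2 / (2 * lam) := by
    rw [hF]
    simp only
    rw [hsum, hnorm]
    field_simp
    ring
  refine ⟨?_, hFstar⟩
  intro w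
  rw [hFstar, hF]
  simp only
  have h1 : -(A * ‖w‖) ≤ ∑ i, g i * w i := by
    have : |∑ i, g i * w i| ≤ A * ‖w‖ := by
      calc |∑ i, g i * w i| ≤ ∑ i, |g i * w i| := Finset.abs_sum_le_sum_abs _ _
        _ ≤ ∑ i, |g i| * ‖w‖ := by
            apply Finset.sum_le_sum
            intro i _
            rw [abs_mul]
            exact mul_le_mul_of_nonneg_left
              (by simpa [Real.norm_eq_abs] using norm_le_pi_norm w i) (abs_nonneg _)
        _ = A * ‖w‖ := by rw [← Finset.sum_mul]
    linarith [abs_le.1 this |>.1]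
  have h2 : -(A ^ 2) / (2 * lam) ≤ -(A * ‖w‖) + lam / 2 * ‖w‖ ^ 2 := by
    have key : 0 ≤ lam / 2 * (‖w‖ - A / lam) ^ 2 := by positivity
    have hl : lam ≠ 0 := hlam.ne'
    have : lam / 2 * (‖w‖ - A / lam) ^ 2 =
        lam / 2 * ‖w‖ ^ 2 - A * ‖w‖ + A ^ 2 / (2 * lam) := by
      field_simp
      ring
    rw [this] at key
    have e : -A ^ 2 / (2 * lam) = -(A ^ 2 / (2 * lam)) := by ring
    linarith
  linarith

end
end

section
/- Let G ∈ ℝ^{n×n} and let G = UΣVᵀ be a singular value decomposition (U, V ∈ ℝ^{n×n} orthogonal, Σ diagonal with nonnegative entries), and let λ > 0. Then the matrix ΔW* = −(trace(Σ)/λ)·UVᵀ is a global minimizer of the function ΔW ↦ ⟨G, ΔW⟩_F + (λ/2)‖ΔW‖²_{ℓ₂→ℓ₂} over ℝ^{n×n}, and the minimum value equals −trace(Σ)²/(2λ). -/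
/-!
Write `t = trace Σ` and `s = ‖ΔW‖`. Conjugating by the SVD, `⟨G, ΔW⟩_F = ∑ᵢ σᵢ ⟨uᵢ, ΔW vᵢ⟩`,
and each `⟨uᵢ, ΔW vᵢ⟩ ≥ -s` by Cauchy–Schwarz since `uᵢ, vᵢ` are unit vectors. Hence
`F ΔW ≥ -t s + (λ/2) s² ≥ -t²/(2λ)`. At `ΔW* = -(t/λ)·UVᵀ` the first bound is attained, because
`⟨G, UVᵀ⟩_F = t`, and `‖ΔW*‖ ≤ t/λ` as `UVᵀ` is orthogonal, which gives `F ΔW* ≤ -t²/(2λ)`.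
-/

noncomputable section

open Matrix

/-- The `ℓ₂ → ℓ₂` operator norm of a matrix: `sup_{‖x‖₂ = 1} ‖Mx‖₂`. -/
def l2OpNorm {n : ℕ} (M : Matrix (Fin n) (Fin n) ℝ) : ℝ :=
  sSup {c : ℝ | ∃ x : Fin n → ℝ,
    Real.sqrt (∑ i, x i ^ 2) = 1 ∧ c = Real.sqrt (∑ i, (M.mulVec x i) ^ 2)}

section Orthogonal

variable {ι : Type*} [Fintype ι] [DecidableEq ι]

lemma sum_sq_mulVec_of_transpose_mul_self {Q : Matrix ι ι ℝ} (hQ : Qᵀ * Q = 1) (x : ι → ℝ) :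
    ∑ i, (Q *ᵥ x) i ^ 2 = ∑ i, x i ^ 2 := by
  have h : Q *ᵥ x ⬝ᵥ Q *ᵥ x = x ⬝ᵥ x := by
    rw [dotProduct_mulVec, ← mulVec_transpose, mulVec_mulVec, hQ, one_mulVec]
  simpa only [dotProduct, sq] using h

lemma sum_sq_col_of_transpose_mul_self {Q : Matrix ι ι ℝ} (hQ : Qᵀ * Q = 1) (i : ι) :
    ∑ j, Q j i ^ 2 = 1 := by
  simpa [mul_apply, one_apply, sq] using congr_fun (congr_fun hQ i) i

lemma transpose_mul_self_mul_transpose {U V : Matrix ι ι ℝ} (hU : Uᵀ * U = 1)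
    (hV' : V * Vᵀ = 1) : (U * Vᵀ)ᵀ * (U * Vᵀ) = 1 := by
  rw [transpose_mul, transpose_transpose, Matrix.mul_assoc, ← Matrix.mul_assoc Uᵀ, hU,
    Matrix.one_mul, hV']

lemma trace_transpose_mul_of_eq_svd {G U V M : Matrix ι ι ℝ} {d : ι → ℝ}
    (hG : G = U * diagonal d * Vᵀ) : (Gᵀ * M).trace = ∑ i, d i * (Uᵀ * M * V) i i := by
  have hGT : Gᵀ = V * diagonal d * Uᵀ := by
    simp [hG, transpose_mul, Matrix.mul_assoc]
  rw [hGT, Matrix.mul_assoc, Matrix.mul_assoc, trace_mul_comm, Matrix.mul_assoc]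
  simp [trace, diagonal_mul]

lemma trace_transpose_mul_mul_transpose_of_eq_svd {G U V : Matrix ι ι ℝ} {d : ι → ℝ}
    (hU : Uᵀ * U = 1) (hV : Vᵀ * V = 1) (hG : G = U * diagonal d * Vᵀ) :
    (Gᵀ * (U * Vᵀ)).trace = ∑ i, d i := by
  rw [trace_transpose_mul_of_eq_svd hG, ← Matrix.mul_assoc, hU, Matrix.one_mul, hV]
  simp only [one_apply_eq, mul_one]

end Orthogonal

lemma neg_sqrt_sum_sq_le_sum_mul {ι : Type*} (s : Finset ι) (u y : ι → ℝ)
    (hu : ∑ j ∈ s, u j ^ 2 = 1) : -Real.sqrt (∑ j ∈ s, y j ^ 2) ≤ ∑ j ∈ s, u j * y j := by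
  have h := Real.sum_mul_le_sqrt_mul_sqrt s (fun j => -u j) y
  simp only [neg_sq, hu, Real.sqrt_one, one_mul, neg_mul, Finset.sum_neg_distrib] at h
  linarith

section L2OpNorm

variable {n : ℕ}

lemma bddAbove_l2OpNorm_set (M : Matrix (Fin n) (Fin n) ℝ) :
    BddAbove {c : ℝ | ∃ x : Fin n → ℝ,
      Real.sqrt (∑ i, x i ^ 2) = 1 ∧ c = Real.sqrt (∑ i, (M.mulVec x i) ^ 2)} := by
  refine ⟨Real.sqrt (∑ i, ∑ j, M i j ^ 2), ?_⟩
  rintro c ⟨x, hx, rfl⟩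
  have hx1 : ∑ i, x i ^ 2 = 1 := Real.sqrt_eq_one.mp hx
  refine Real.sqrt_le_sqrt (Finset.sum_le_sum fun i _ => ?_)
  have h := Finset.sum_mul_sq_le_sq_mul_sq Finset.univ (fun j => M i j) x
  rw [hx1, mul_one] at h
  simpa [mulVec, dotProduct] using h

lemma sqrt_sum_sq_mulVec_le_l2OpNorm (M : Matrix (Fin n) (Fin n) ℝ) {x : Fin n → ℝ}
    (hx : ∑ i, x i ^ 2 = 1) : Real.sqrt (∑ i, (M *ᵥ x) i ^ 2) ≤ l2OpNorm M :=
  le_csSup (bddAbove_l2OpNorm_set M) ⟨x, by rw [hx, Real.sqrt_one], rfl⟩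

lemma l2OpNorm_nonneg (M : Matrix (Fin n) (Fin n) ℝ) : 0 ≤ l2OpNorm M :=
  Real.sSup_nonneg (by rintro c ⟨x, -, rfl⟩; exact Real.sqrt_nonneg _)

lemma l2OpNorm_smul_le_of_transpose_mul_self {Q : Matrix (Fin n) (Fin n) ℝ} (hQ : Qᵀ * Q = 1)
    (c : ℝ) : l2OpNorm (c • Q) ≤ |c| := by
  refine Real.sSup_le ?_ (abs_nonneg c)
  rintro _ ⟨x, hx, rfl⟩
  have hx1 : ∑ i, x i ^ 2 = 1 := Real.sqrt_eq_one.mp hx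
  have h : ∑ i, ((c • Q) *ᵥ x) i ^ 2 = c ^ 2 := by
    simp only [smul_mulVec, Pi.smul_apply, smul_eq_mul, mul_pow, ← Finset.mul_sum,
      sum_sq_mulVec_of_transpose_mul_self hQ, hx1, mul_one]
  rw [h, Real.sqrt_sq_eq_abs]

lemma neg_l2OpNorm_le_diag_conj {U V : Matrix (Fin n) (Fin n) ℝ} (hU : Uᵀ * U = 1)
    (hV : Vᵀ * V = 1) (M : Matrix (Fin n) (Fin n) ℝ) (i : Fin n) :
    -l2OpNorm M ≤ (Uᵀ * M * V) i i := by
  have hentry : (Uᵀ * M * V) i i = ∑ j, U j i * (M *ᵥ fun k => V k i) j := by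
    rw [Matrix.mul_assoc]; rfl
  have hcs := neg_sqrt_sum_sq_le_sum_mul Finset.univ (fun j => U j i) (M *ᵥ fun k => V k i)
    (sum_sq_col_of_transpose_mul_self hU i)
  have hnorm := sqrt_sum_sq_mulVec_le_l2OpNorm M (sum_sq_col_of_transpose_mul_self hV i)
  rw [hentry]
  linarith

lemma neg_sum_mul_l2OpNorm_le_trace_of_eq_svd {G U V : Matrix (Fin n) (Fin n) ℝ} {d : Fin n → ℝ}
    (hU : Uᵀ * U = 1) (hV : Vᵀ * V = 1) (hd : ∀ i, 0 ≤ d i) (hG : G = U * diagonal d * Vᵀ)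
    (M : Matrix (Fin n) (Fin n) ℝ) : -((∑ i, d i) * l2OpNorm M) ≤ (Gᵀ * M).trace := by
  rw [trace_transpose_mul_of_eq_svd hG, Finset.sum_mul, ← Finset.sum_neg_distrib]
  refine Finset.sum_le_sum fun i _ => ?_
  rw [← mul_neg]
  exact mul_le_mul_of_nonneg_left (neg_l2OpNorm_le_diag_conj hU hV M i) (hd i)

end L2OpNorm

lemma neg_sq_div_le_neg_mul_add_sq {t s lam : ℝ} (hlam : 0 < lam) :
    -t ^ 2 / (2 * lam) ≤ -(t * s) + lam / 2 * s ^ 2 := by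
  rw [div_le_iff₀ (by positivity)]
  nlinarith [sq_nonneg (lam * s - t)]

theorem stmt19_general {n : ℕ} (G U V : Matrix (Fin n) (Fin n) ℝ) (d : Fin n → ℝ)
    (hU : Uᵀ * U = 1) (hV : Vᵀ * V = 1) (hV' : V * Vᵀ = 1)
    (hd : ∀ i, 0 ≤ d i) (hG : G = U * Matrix.diagonal d * Vᵀ)
    (lam : ℝ) (hlam : 0 < lam)
    (F : Matrix (Fin n) (Fin n) ℝ → ℝ)
    (hF : F = fun ΔW => (Gᵀ * ΔW).trace + lam / 2 * l2OpNorm ΔW ^ 2)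
    (Wstar : Matrix (Fin n) (Fin n) ℝ)
    (hWstar : Wstar = -((Matrix.diagonal d).trace / lam) • (U * Vᵀ)) :
    (∀ ΔW : Matrix (Fin n) (Fin n) ℝ, F Wstar ≤ F ΔW) ∧
      F Wstar = -(Matrix.diagonal d).trace ^ 2 / (2 * lam) := by
  set t := (Matrix.diagonal d).trace
  have ht_sum : t = ∑ i, d i := trace_diagonal d
  have ht_nonneg : 0 ≤ t := ht_sum ▸ Finset.sum_nonneg fun i _ => hd i
  have hF_ge (ΔW : Matrix (Fin n) (Fin n) ℝ) : -t ^ 2 / (2 * lam) ≤ F ΔW := by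
    have h := neg_sum_mul_l2OpNorm_le_trace_of_eq_svd hU hV hd hG ΔW
    rw [← ht_sum] at h
    rw [hF]
    linarith [neg_sq_div_le_neg_mul_add_sq (t := t) (s := l2OpNorm ΔW) hlam]
  have hinner_star : (Gᵀ * Wstar).trace = -(t ^ 2 / lam) := by
    rw [hWstar, Matrix.mul_smul, trace_smul, trace_transpose_mul_mul_transpose_of_eq_svd hU hV hG,
      ← ht_sum, smul_eq_mul]
    ring
  have hnorm_star : l2OpNorm Wstar ≤ t / lam := by
    have h := l2OpNorm_smul_le_of_transpose_mul_self (transpose_mul_self_mul_transpose hU hV')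
      (-(t / lam))
    rwa [abs_neg, abs_of_nonneg (by positivity), ← hWstar] at h
  have hF_star : F Wstar ≤ -t ^ 2 / (2 * lam) :=
    calc F Wstar = -(t ^ 2 / lam) + lam / 2 * l2OpNorm Wstar ^ 2 := by simp only [hF, hinner_star]
      _ ≤ -(t ^ 2 / lam) + lam / 2 * (t / lam) ^ 2 := by
        gcongr
        exact l2OpNorm_nonneg Wstar
      _ = -t ^ 2 / (2 * lam) := by field_simp; ring
  have heq : F Wstar = -t ^ 2 / (2 * lam) := le_antisymm hF_star (hF_ge Wstar)
  exact ⟨fun ΔW => heq ▸ hF_ge ΔW, heq⟩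

/-- Muon as steepest descent for the spectral norm: if `G = UΣVᵀ` is an SVD and `λ > 0`,
then `ΔW* = -(trace(Σ)/λ)·UVᵀ` globally minimizes
`ΔW ↦ ⟨G, ΔW⟩_F + (λ/2)‖ΔW‖²_{ℓ₂→ℓ₂}`, with minimum value `-trace(Σ)²/(2λ)`. -/
theorem stmt19 {n : ℕ} (G U V : Matrix (Fin n) (Fin n) ℝ) (d : Fin n → ℝ)
    (hU : Uᵀ * U = 1) (hU' : U * Uᵀ = 1) (hV : Vᵀ * V = 1) (hV' : V * Vᵀ = 1)
    (hd : ∀ i, 0 ≤ d i) (hG : G = U * Matrix.diagonal d * Vᵀ)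
    (lam : ℝ) (hlam : 0 < lam)
    (F : Matrix (Fin n) (Fin n) ℝ → ℝ)
    (hF : F = fun ΔW => (Gᵀ * ΔW).trace + lam / 2 * l2OpNorm ΔW ^ 2)
    (Wstar : Matrix (Fin n) (Fin n) ℝ)
    (hWstar : Wstar = -((Matrix.diagonal d).trace / lam) • (U * Vᵀ)) :
    (∀ ΔW : Matrix (Fin n) (Fin n) ℝ, F Wstar ≤ F ΔW) ∧
      F Wstar = -(Matrix.diagonal d).trace ^ 2 / (2 * lam) :=
  stmt19_general G U V d hU hV hV' hd hG lam hlam F hF Wstar hWstar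

end
end
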